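/- Let η > 0, ρ > 0, and w ∈ ℝ. Then the function y ↦ (η/2)(min(y,0))² + (ρ/2)(y − w)² on ℝ attains its minimum at the unique point y* = max(0, w) + (ρ/(η+ρ)) · min(0, w); that is, y* is a minimizer and any minimizer equals y*. -/
import Mathlib

lemma slack_aux (η ρ w : ℝ) (hη : 0 < η) (hρ : 0 < ρ) :
    η / 2 * (ρ / (η + ρ) * w) ^ 2 + ρ / 2 * (ρ / (η + ρ) * w - w) ^ 2 =
      η * ρ * w ^ 2 / (2 * (η + ρ)) := by
  have hs : (η + ρ) ≠ 0 := by positivity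
  field_simp
  ring

/-- For `η, ρ > 0` and `w ∈ ℝ`, the function `y ↦ (η/2)(min(y,0))² + (ρ/2)(y − w)²`
has the unique minimizer `y* = max 0 w + (ρ/(η+ρ)) min 0 w`. -/
theorem slack_update_unique_min (η ρ w : ℝ) (hη : 0 < η) (hρ : 0 < ρ) :
    (∀ y : ℝ, η / 2 * (min (max 0 w + ρ / (η + ρ) * min 0 w) 0) ^ 2 +
        ρ / 2 * (max 0 w + ρ / (η + ρ) * min 0 w - w) ^ 2 ≤
          η / 2 * (min y 0) ^ 2 + ρ / 2 * (y - w) ^ 2) ∧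
      ∀ y : ℝ, (∀ t : ℝ, η / 2 * (min y 0) ^ 2 + ρ / 2 * (y - w) ^ 2 ≤
          η / 2 * (min t 0) ^ 2 + ρ / 2 * (t - w) ^ 2) →
        y = max 0 w + ρ / (η + ρ) * min 0 w := by
  have hs : 0 < η + ρ := by linarith
  have key : ∀ y : ℝ, η / 2 * (min (max 0 w + ρ / (η + ρ) * min 0 w) 0) ^ 2 +
        ρ / 2 * (max 0 w + ρ / (η + ρ) * min 0 w - w) ^ 2 ≤
          η / 2 * (min y 0) ^ 2 + ρ / 2 * (y - w) ^ 2 := by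
    intro y
    rcases le_or_gt 0 w with hw | hw
    · rw [max_eq_right hw, min_eq_left hw, mul_zero, add_zero]
      rw [min_eq_right hw, sub_self]
      have h0 : η / 2 * (0:ℝ) ^ 2 + ρ / 2 * 0 ^ 2 = 0 := by ring
      rw [h0]
      positivity
    · rw [max_eq_left hw.le, min_eq_right hw.le, zero_add]
      have hyn : ρ / (η + ρ) * w ≤ 0 :=
        mul_nonpos_of_nonneg_of_nonpos (by positivity) hw.le
      rw [min_eq_left hyn, slack_aux η ρ w hη hρ,
        div_le_iff₀ (by positivity : (0:ℝ) < 2 * (η + ρ))]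
      rcases le_or_gt y 0 with hy | hy
      · rw [min_eq_left hy]
        nlinarith [sq_nonneg ((η + ρ) * y - ρ * w)]
      · rw [min_eq_right hy.le]
        nlinarith [mul_pos (mul_pos hρ hs) (mul_pos hy (neg_pos.mpr hw)),
          mul_nonneg (mul_nonneg hρ.le hs.le) (sq_nonneg y), sq_nonneg (ρ * w)]
  refine ⟨key, fun y hy => ?_⟩
  have h1 := hy (max 0 w + ρ / (η + ρ) * min 0 w)
  have h2 := key y
  have heq : η / 2 * (min y 0) ^ 2 + ρ / 2 * (y - w) ^ 2 =
      η / 2 * (min (max 0 w + ρ / (η + ρ) * min 0 w) 0) ^ 2 +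
        ρ / 2 * (max 0 w + ρ / (η + ρ) * min 0 w - w) ^ 2 := le_antisymm h1 h2
  rcases le_or_gt 0 w with hw | hw
  · rw [max_eq_right hw, min_eq_left hw, mul_zero, add_zero] at heq ⊢
    rw [min_eq_right hw, sub_self] at heq
    have hm : (0:ℝ) ≤ η / 2 * (min y 0) ^ 2 := by positivity
    have h4 : (y - w) ^ 2 = 0 := by nlinarith [sq_nonneg (y - w), sq_nonneg (min y 0)]
    have := pow_eq_zero_iff (n := 2) (by norm_num) |>.mp h4
    linarith
  · rw [max_eq_left hw.le, min_eq_right hw.le, zero_add] at heq ⊢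
    have hyn : ρ / (η + ρ) * w ≤ 0 :=
      mul_nonpos_of_nonneg_of_nonpos (by positivity) hw.le
    rw [min_eq_left hyn, slack_aux η ρ w hη hρ] at heq
    have heq2 : (η / 2 * (min y 0) ^ 2 + ρ / 2 * (y - w) ^ 2) * (2 * (η + ρ)) =
        η * ρ * w ^ 2 := by
      rw [heq]; field_simp
    rcases le_or_gt y 0 with hy' | hy'
    · rw [min_eq_left hy'] at heq2
      have h5 : ((η + ρ) * y - ρ * w) ^ 2 = 0 := by nlinarith
      have h6 := pow_eq_zero_iff (n := 2) (by norm_num) |>.mp h5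
      field_simp
      linarith
    · rw [min_eq_right hy'.le] at heq2
      exfalso
      nlinarith [mul_pos (mul_pos hρ hs) (mul_pos hy' (neg_pos.mpr hw)),
        mul_nonneg (mul_nonneg hρ.le hs.le) (sq_nonneg y), sq_nonneg (ρ * w)]
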